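/- Assume g ≠ 1 (so g generates G). Let b ∈ {0, 1} ⊆ ℕ and s₀, s₁ ∈ ZMod p, and set c⁽⁰⁾ := g^b · h^{s₀} and c⁽¹⁾ := g^{1−b} · h^{s₁} (the pair of candidate bit commitments, one committing to b and one to 1−b). If c⁽⁰⁾ = c⁽¹⁾ then s₀ ≠ s₁ and h = g^{(2·(b : ZMod p) − 1)·(s₁ − s₀)⁻¹}. In particular, if the discrete logarithm of h in base g is unknown, the two candidate commitments for each bit position are distinct, so a party comparing the selected commitment c^{(k)} against its stored candidates recovers the committed bit unambiguously. (Well-definedness of output-value recovery in finalization.) -/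

import Mathlib

/-!
Since `|G| = p` is prime and `g ≠ 1`, the map `a ↦ g ^ a.val` is an isomorphism from `ZMod p` onto
`G` turning `+` into `·`. Writing `h = g ^ x`, the equation `c⁽⁰⁾ = c⁽¹⁾` becomes the linear
equation `b + x s₀ = (1 - b) + x s₁` in the field `ZMod p`, i.e. `x (s₁ - s₀) = 2b - 1 = ±1`,
which forces `s₀ ≠ s₁` and `x = (2b - 1)(s₁ - s₀)⁻¹`.
-/

section PowVal

variable {M : Type*} [Monoid M] {n : ℕ} {u : M}

theorem pow_val_natCast (hu : u ^ n = 1) (m : ℕ) : u ^ (m : ZMod n).val = u ^ m := by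
  rw [ZMod.val_natCast, ← pow_eq_pow_mod m hu]

theorem pow_val_add [NeZero n] (hu : u ^ n = 1) (a b : ZMod n) :
    u ^ (a + b).val = u ^ a.val * u ^ b.val := by
  rw [ZMod.val_add, ← pow_eq_pow_mod _ hu, pow_add]

theorem pow_val_mul [NeZero n] (hu : u ^ n = 1) (a b : ZMod n) :
    u ^ (a * b).val = (u ^ a.val) ^ b.val := by
  rw [ZMod.val_mul, ← pow_eq_pow_mod _ hu, pow_mul]

end PowVal

section OrderOf

variable {G : Type*} [Group G] {n : ℕ} [NeZero n] {g : G}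

theorem pow_val_injective (hg : orderOf g = n) : Function.Injective fun a : ZMod n => g ^ a.val :=
  fun a b hab => ZMod.val_injective n <|
    pow_injOn_Iio_orderOf (by simpa [hg] using a.val_lt) (by simpa [hg] using b.val_lt) hab

theorem exists_pow_val_eq [Fintype G] (hG : Fintype.card G = n) (hg : orderOf g = n) (h : G) :
    ∃ x : ZMod n, g ^ x.val = h :=
  ((Fintype.bijective_iff_injective_and_card _).2 ⟨pow_val_injective hg, by simp [hG]⟩).2 h

end OrderOf

/-- Well-definedness of output-value recovery in finalization: the two
candidate bit commitments (one to `b`, one to `1 - b`) coincide only if the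
discrete logarithm of `h` in base `g` is revealed. -/
theorem bit_candidates_distinct {p : ℕ} [Fact p.Prime] {G : Type*} [CommGroup G]
    [Fintype G] (hG : Fintype.card G = p) (g h : G) (hg : g ≠ 1)
    (b : ℕ) (hb : b ∈ ({0, 1} : Set ℕ)) (s₀ s₁ : ZMod p)
    (c0 c1 : G) (hc0 : c0 = g ^ b * h ^ s₀.val)
    (hc1 : c1 = g ^ (1 - b) * h ^ s₁.val)
    (heq : c0 = c1) :
    s₀ ≠ s₁ ∧ h = g ^ ((2 * (b : ZMod p) - 1) * (s₁ - s₀)⁻¹).val := by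
  have hu : ∀ u : G, u ^ p = 1 := fun u => hG ▸ pow_card_eq_one
  have hgp : orderOf g = p := orderOf_eq_prime (hu g) hg
  obtain ⟨x, rfl⟩ := exists_pow_val_eq hG hgp h
  have hcast : ((1 - b : ℕ) : ZMod p) = 1 - b := by
    rcases hb with rfl | rfl <;> simp
  have hlin : (b : ZMod p) + x * s₀ = 1 - b + x * s₁ := by
    apply pow_val_injective hgp
    simp only [pow_val_add (hu g), pow_val_mul (hu g), ← hcast, pow_val_natCast (hu g)]
    rw [← hc0, ← hc1, heq]
  have hsign : 2 * (b : ZMod p) - 1 ≠ 0 := by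
    rcases hb with rfl | rfl <;> norm_num
  have hx : x * (s₁ - s₀) = 2 * b - 1 := by linear_combination -hlin
  have hne : s₀ ≠ s₁ := by
    rintro rfl
    exact hsign (by simpa using hx.symm)
  have hdlog : x = (2 * b - 1) * (s₁ - s₀)⁻¹ :=
    (eq_mul_inv_iff_mul_eq₀ (sub_ne_zero.2 hne.symm)).2 hx
  exact ⟨hne, by rw [hdlog]⟩
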